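/- arXiv:1001.3480 — 3 statements merged into one kernel-verified Lean document; each statement's English description precedes it below -/
import Mathlib

section
/- Let P be the transition matrix of an estimator on state space [q] satisfying P_{ii} = c ≥ 1/q + ε/(2q) for all i and P_{ij} = (1-c)/(q-1) for all i ≠ j, where ε ∈ (0,1). Then P = e^{b Q^(q)} for some b with 0 < b ≤ -ln(ε/(2(q-1))). -/
/-!
`-Q^(q) = 1 - J/q` is an idempotent (`J` the all-ones matrix), and on an idempotent `e` the
exponential series collapses to `exp (s • e) = eˢ • e + (1 - e)`. Hence `e^{b Q^(q)}` has diagonal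
`(1 + (q - 1) r) / q` and off-diagonal `(1 - r) / q` with `r = e^{-b}`; the channel in question
is matched by `r = (q c - 1) / (q - 1)`, which lies in `[ε / (2 (q - 1)), 1)`.
-/

noncomputable def Qmat (q : ℕ) : Matrix (Fin q) (Fin q) ℝ :=
  fun i j => if i = j then -((q : ℝ) - 1) / q else 1 / q

open NormedSpace Nat

theorem IsIdempotentElem.exp_smul_eq {A : Type*} [Ring A] [Algebra ℝ A] [TopologicalSpace A]
    [IsTopologicalRing A] [ContinuousSMul ℝ A] [T2Space A] {e : A} (he : IsIdempotentElem e)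
    (s : ℝ) : exp (s • e) = Real.exp s • e + (1 - e) := by
  have hpow (n : ℕ) : (s • e) ^ n = s ^ n • e + (0 : ℝ) ^ n • (1 - e) := by
    cases n with
    | zero => simp
    | succ n => simp [smul_pow, he.pow_succ_eq]
  have hexp (x : ℝ) : HasSum (fun n => (n !⁻¹ : ℝ) * x ^ n) (Real.exp x) := by
    simpa [Real.exp_eq_exp_ℝ, div_eq_inv_mul] using expSeries_div_hasSum_exp x
  have hsum : HasSum (fun n => (n !⁻¹ : ℝ) • (s • e) ^ n)
      (Real.exp s • e + Real.exp 0 • (1 - e)) := by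
    simp_rw [hpow, smul_add, smul_smul]
    exact ((hexp s).smul_const e).add ((hexp 0).smul_const (1 - e))
  rw [exp_eq_tsum ℝ]
  beta_reduce
  rw [hsum.tsum_eq, Real.exp_zero, one_smul]

theorem Qmat_eq_inv_natCast_smul_sub_one (q : ℕ) :
    Qmat q = (q : ℝ)⁻¹ • Matrix.of (fun _ _ => 1) - 1 := by
  ext i j
  have hq : (q : ℝ) ≠ 0 := by have := i.pos; positivity
  simp only [Qmat, Matrix.sub_apply, Matrix.smul_apply, Matrix.of_apply, Matrix.one_apply,
    smul_eq_mul]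
  split_ifs <;> field_simp <;> ring

theorem isIdempotentElem_neg_Qmat (q : ℕ) : IsIdempotentElem (-Qmat q) := by
  have hmean : IsIdempotentElem ((q : ℝ)⁻¹ • Matrix.of fun (_ _ : Fin q) => (1 : ℝ)) := by
    ext i j
    have hq : (q : ℝ) ≠ 0 := by have := i.pos; positivity
    simp only [Matrix.smul_apply, Matrix.mul_apply, Matrix.of_apply, mul_one, Finset.sum_const,
      Finset.card_univ, Fintype.card_fin, nsmul_eq_mul, smul_eq_mul]
    field_simp
  rw [Qmat_eq_inv_natCast_smul_sub_one, neg_sub]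
  exact hmean.one_sub

theorem exp_smul_Qmat_apply (q : ℕ) (b : ℝ) (i j : Fin q) :
    exp (b • Qmat q) i j =
      if i = j then (1 + ((q : ℝ) - 1) * Real.exp (-b)) / q else (1 - Real.exp (-b)) / q := by
  have hq : (q : ℝ) ≠ 0 := by have := i.pos; positivity
  rw [← neg_smul_neg, (isIdempotentElem_neg_Qmat q).exp_smul_eq]
  simp only [Qmat, Matrix.add_apply, Matrix.sub_apply, Matrix.smul_apply, Matrix.neg_apply,
    Matrix.one_apply, smul_eq_mul]
  split_ifs <;> field_simp <;> ring

theorem stmt6_general (q : ℕ) (hq : 2 ≤ q) (ε c : ℝ) (hε : 0 < ε)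
    (hc : 1 / q + ε / (2 * q) ≤ c) (hc1 : c < 1)
    (P : Matrix (Fin q) (Fin q) ℝ)
    (hP : ∀ i j, P i j = if i = j then c else (1 - c) / ((q : ℝ) - 1)) :
    ∃ b : ℝ, 0 < b ∧ b ≤ -Real.log (ε / (2 * ((q : ℝ) - 1))) ∧
      P = NormedSpace.exp (b • Qmat q) := by
  have hq1 : (0 : ℝ) < q - 1 := by
    have : (2 : ℝ) ≤ q := by exact_mod_cast hq
    linarith
  have hqc : 1 + ε / 2 ≤ q * c :=
    calc 1 + ε / 2 = q * (1 / q + ε / (2 * q)) := by field_simp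
      _ ≤ q * c := by gcongr
  obtain ⟨r, hr⟩ : ∃ r : ℝ, r * (q - 1) = q * c - 1 := ⟨_, div_mul_cancel₀ _ hq1.ne'⟩
  have hr_ge : ε / (2 * ((q : ℝ) - 1)) ≤ r := by
    rw [div_le_iff₀ (by positivity)]
    linear_combination 2 * hqc - 2 * hr
  have hr_pos : 0 < r := lt_of_lt_of_le (by positivity) hr_ge
  have hr_lt_one : r < 1 := by nlinarith
  refine ⟨-Real.log r, neg_pos.2 (Real.log_neg hr_pos hr_lt_one),
    neg_le_neg (Real.log_le_log (by positivity) hr_ge), ?_⟩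
  ext i j
  rw [hP, exp_smul_Qmat_apply, neg_neg, Real.exp_log hr_pos]
  split_ifs
  · field_simp
    linear_combination -hr
  · field_simp
    linear_combination hr

/-- An estimator channel `P` with `P_{ii} = c`, `1/q + ε/(2q) ≤ c < 1`, and
`P_{ij} = (1-c)/(q-1)` off the diagonal equals `e^{b Q^(q)}` for some
`0 < b ≤ -ln(ε/(2(q-1)))`. -/
theorem stmt6 (q : ℕ) (hq : 2 ≤ q) (ε c : ℝ) (hε : 0 < ε) (hε1 : ε < 1)
    (hc : 1 / q + ε / (2 * q) ≤ c) (hc1 : c < 1)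
    (P : Matrix (Fin q) (Fin q) ℝ)
    (hP : ∀ i j, P i j = if i = j then c else (1 - c) / ((q : ℝ) - 1)) :
    ∃ b : ℝ, 0 < b ∧ b ≤ -Real.log (ε / (2 * ((q : ℝ) - 1))) ∧
      P = NormedSpace.exp (b • Qmat q) :=
  stmt6_general q hq ε c hε hc hc1 P hP
end

section
/- (Four-point test with noisy distances.) Let d be a tree metric on {a,b,c,d} with topology ab|cd and internal edge weight w ≥ f > 0. Let d̂ be any function with |d̂(u,v) - d(u,v)| < f/8 for all pairs u,v. Then (1/2)[d̂(a,c) + d̂(b,d) - d̂(a,b) - d̂(c,d)] > f/2, while (1/2)[d̂(a,b) + d̂(c,d) - d̂(a,c) - d̂(b,d)] < -f/2 and (1/2)[d̂(a,b) + d̂(c,d) - d̂(a,d) - d̂(b,c)] < -f/2; in particular, only the split ab|cd has four-point value exceeding f/2. -/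
/-- Four-point test with noisy distances: if the tree metric on `{a,b,c,d}` has
topology `ab|cd` with internal edge weight `w ≥ f > 0`, and `d̂` (given by the
six values `Dab, ..., Dcd`) approximates each pairwise distance within `f/8`,
then the estimated four-point value of the true split `ab|cd` exceeds `f/2`,
while those of the two wrong splits `ac|bd` and `ad|bc` are below `-f/2`; in
particular only the split `ab|cd` has four-point value exceeding `f/2`. -/
theorem stmt10 (xa xb xc xd w f : ℝ) (hxa : 0 ≤ xa) (hxb : 0 ≤ xb) (hxc : 0 ≤ xc)
    (hxd : 0 ≤ xd) (hf : 0 < f) (hw : f ≤ w)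
    (Dab Dac Dad Dbc Dbd Dcd : ℝ)
    (hab : |Dab - (xa + xb)| < f / 8) (hcd : |Dcd - (xc + xd)| < f / 8)
    (hac : |Dac - (xa + w + xc)| < f / 8) (hbd : |Dbd - (xb + w + xd)| < f / 8)
    (had : |Dad - (xa + w + xd)| < f / 8) (hbc : |Dbc - (xb + w + xc)| < f / 8) :
    f / 2 < (1 / 2) * (Dac + Dbd - Dab - Dcd) ∧
    (1 / 2) * (Dab + Dcd - Dac - Dbd) < -(f / 2) ∧
    (1 / 2) * (Dab + Dcd - Dad - Dbc) < -(f / 2) := by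
  rw [abs_sub_lt_iff] at hab hcd hac hbd had hbc
  obtain ⟨h1, h2⟩ := hab
  obtain ⟨h3, h4⟩ := hcd
  obtain ⟨h5, h6⟩ := hac
  obtain ⟨h7, h8⟩ := hbd
  obtain ⟨h9, h10⟩ := had
  obtain ⟨h11, h12⟩ := hbc
  refine ⟨by nlinarith, by nlinarith, by nlinarith⟩
end

section
/- (Non-solvability of ASR gives channel mixture decomposition.) Let M = e^{τQ} be a q × q reversible transition matrix with stationary distribution π and suppose the q rows of the r-step leaf distribution μ^{r,i} (the distribution of leaf states of an r-level homogeneous tree given root state i) satisfy: there exists δ ∈ (0,1) and probability measures ν̄, ν'^i with μ^{r,i} = (1-δ)ν̄ + δ ν'^i for all i. Then on an ℓ-level tree (ℓ > r), the leaf distribution μ^{ℓ,i} can be sampled by first running the process to level ℓ - r, independently erasing each level-(ℓ-r) state to * with probability 1-δ, and then filling in each subtree below a *-node from ν̄ and below a node labelled j from ν'^j; consequently μ^{ℓ,i} equals the corresponding mixture over erasure patterns. -/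
/-!
Conditioned on the states at level `a`, the `2 ^ a` subtrees hanging below level `a` evolve
independently, the `t`-th one as an `r`-level tree rooted at the state of node `t`
(Chapman–Kolmogorov along the tree, proved by induction on `a` by splitting at the root).
Substituting `μ^{r,j} = (1-δ) ν̄ + δ ν'^j` into each factor gives the erasure mixture.
-/

/-- Joint distribution of the `2^ℓ` leaf states of an `ℓ`-level homogeneous
(complete binary) tree with transition matrix `M` on every edge, conditioned on
the root being in state `i`. -/
noncomputable def leafDist {q : ℕ} (M : Matrix (Fin q) (Fin q) ℝ) :
    (ℓ : ℕ) → Fin q → (Fin (2 ^ ℓ) → Fin q) → ℝ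
  | 0, i, f => if f ⟨0, by positivity⟩ = i then 1 else 0
  | ℓ + 1, i, f =>
    ∑ j : Fin q, ∑ j' : Fin q,
      M i j * M i j' *
        leafDist M ℓ j (fun x => f ⟨x.1, by
          have hx := x.2
          have h : 2 ^ ℓ ≤ 2 ^ (ℓ + 1) := Nat.pow_le_pow_right (by norm_num) (Nat.le_succ ℓ)
          omega⟩) *
        leafDist M ℓ j' (fun x => f ⟨2 ^ ℓ + x.1, by
          have hx := x.2
          have h : 2 ^ (ℓ + 1) = 2 ^ ℓ * 2 := pow_succ 2 ℓ
          omega⟩)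

/-- The leaves of the `t`-th level-`a` subtree of an `(a+r)`-level tree. -/
def restr {q : ℕ} (a r : ℕ) (f : Fin (2 ^ (a + r)) → Fin q) (t : Fin (2 ^ a)) :
    Fin (2 ^ r) → Fin q :=
  fun x => f ⟨t.1 * 2 ^ r + x.1, by
    have hx := x.2
    have ht : t.1 + 1 ≤ 2 ^ a := t.2
    calc t.1 * 2 ^ r + x.1 < t.1 * 2 ^ r + 2 ^ r := by omega
      _ = (t.1 + 1) * 2 ^ r := by ring
      _ ≤ 2 ^ a * 2 ^ r := Nat.mul_le_mul_right _ ht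
      _ = 2 ^ (a + r) := (pow_add 2 a r).symm⟩

open Finset

lemma sum_sum_mul_sum_sum {ι κ R : Type*} [Fintype ι] [Fintype κ] [CommSemiring R]
    (c : ι → ι → R) (A B : ι → κ → R) (P Q : κ → R) :
    ∑ j, ∑ j', c j j' * (∑ x, A j x * P x) * (∑ y, B j' y * Q y) =
      ∑ x, ∑ y, (∑ j, ∑ j', c j j' * A j x * B j' y) * (P x * Q y) := by
  have expand : ∀ j j', c j j' * (∑ x, A j x * P x) * (∑ y, B j' y * Q y) =
      ∑ x, ∑ y, c j j' * A j x * B j' y * (P x * Q y) := by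
    intro j j'
    rw [mul_assoc, sum_mul_sum, mul_sum]
    exact sum_congr rfl fun _ _ => by rw [mul_sum]; exact sum_congr rfl fun _ _ => by ring
  calc _ = ∑ j, ∑ j', ∑ x, ∑ y, c j j' * A j x * B j' y * (P x * Q y) := by
        simp only [expand]
    _ = ∑ j, ∑ x, ∑ j', ∑ y, c j j' * A j x * B j' y * (P x * Q y) :=
        sum_congr rfl fun _ _ => sum_comm
    _ = ∑ x, ∑ j, ∑ y, ∑ j', c j j' * A j x * B j' y * (P x * Q y) := by
        rw [sum_comm]
        exact sum_congr rfl fun _ _ => sum_congr rfl fun _ _ => sum_comm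
    _ = _ := by
        simp only [sum_mul]
        exact sum_congr rfl fun _ _ => sum_comm

instance : Subsingleton (Fin (2 ^ 0)) := inferInstanceAs (Subsingleton (Fin 1))

def splitLeaves (ℓ : ℕ) : Fin (2 ^ ℓ) ⊕ Fin (2 ^ ℓ) ≃ Fin (2 ^ (ℓ + 1)) :=
  finSumFinEquiv.trans (finCongr (by rw [pow_succ, mul_two]))

def splitLeafFun (α : Type*) (ℓ : ℕ) :
    (Fin (2 ^ ℓ) → α) × (Fin (2 ^ ℓ) → α) ≃ (Fin (2 ^ (ℓ + 1)) → α) :=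
  (Equiv.sumArrowEquivProdArrow _ _ _).symm.trans ((splitLeaves ℓ).arrowCongr (Equiv.refl α))

section SplitLeafFun

variable {α : Type*} {ℓ : ℕ} (g : (Fin (2 ^ ℓ) → α) × (Fin (2 ^ ℓ) → α))
  (t : Fin (2 ^ ℓ))

@[simp]
lemma splitLeafFun_apply_inl : splitLeafFun α ℓ g (splitLeaves ℓ (.inl t)) = g.1 t := by
  simp only [splitLeafFun, Equiv.trans_apply, Equiv.arrowCongr_apply, Function.comp_apply,
    Equiv.symm_apply_apply, Equiv.refl_apply]
  rfl

@[simp]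
lemma splitLeafFun_apply_inr : splitLeafFun α ℓ g (splitLeaves ℓ (.inr t)) = g.2 t := by
  simp only [splitLeafFun, Equiv.trans_apply, Equiv.arrowCongr_apply, Function.comp_apply,
    Equiv.symm_apply_apply, Equiv.refl_apply]
  rfl

end SplitLeafFun

section LeafDist

variable {q : ℕ} (M : Matrix (Fin q) (Fin q) ℝ)

lemma restr_splitLeaves_inl {a r : ℕ} (f : Fin (2 ^ (a + 1 + r)) → Fin q) (t : Fin (2 ^ a)) :
    restr (a + 1) r f (splitLeaves a (.inl t)) =
      restr a r
        (fun x => f (Fin.cast (by rw [Nat.succ_add]) (splitLeaves (a + r) (.inl x)))) t := by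
  ext x
  simp [restr, splitLeaves]

lemma restr_splitLeaves_inr {a r : ℕ} (f : Fin (2 ^ (a + 1 + r)) → Fin q) (t : Fin (2 ^ a)) :
    restr (a + 1) r f (splitLeaves a (.inr t)) =
      restr a r
        (fun x => f (Fin.cast (by rw [Nat.succ_add]) (splitLeaves (a + r) (.inr x)))) t := by
  ext x
  simp only [restr, splitLeaves, Equiv.trans_apply, finSumFinEquiv_apply_right, finCongr_apply]
  congr 3
  simp only [Fin.val_cast, Fin.val_natAdd]
  ring

lemma leafDist_zero (i : Fin q) (f : Fin (2 ^ 0) → Fin q) :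
    leafDist M 0 i f = if f ⟨0, Nat.one_pos⟩ = i then 1 else 0 := rfl

lemma leafDist_succ (ℓ : ℕ) (i : Fin q) (f : Fin (2 ^ (ℓ + 1)) → Fin q) :
    leafDist M (ℓ + 1) i f = ∑ j, ∑ j', M i j * M i j' *
      leafDist M ℓ j (fun x => f (splitLeaves ℓ (.inl x))) *
      leafDist M ℓ j' (fun x => f (splitLeaves ℓ (.inr x))) := rfl

lemma leafDist_splitLeafFun (ℓ : ℕ) (i : Fin q)
    (g : (Fin (2 ^ ℓ) → Fin q) × (Fin (2 ^ ℓ) → Fin q)) :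
    leafDist M (ℓ + 1) i (splitLeafFun _ ℓ g) =
      ∑ j, ∑ j', M i j * M i j' * leafDist M ℓ j g.1 * leafDist M ℓ j' g.2 := by
  simp only [leafDist_succ, splitLeafFun_apply_inl, splitLeafFun_apply_inr]

lemma leafDist_eq_of_level_eq {ℓ ℓ' : ℕ} (h : ℓ = ℓ') (i : Fin q)
    (f : Fin (2 ^ ℓ) → Fin q) :
    leafDist M ℓ i f = leafDist M ℓ' i (f ∘ Fin.cast (by rw [h])) := by
  subst h; rfl

lemma sum_leafDist_zero_mul (i : Fin q) (F : (Fin (2 ^ 0) → Fin q) → ℝ) :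
    ∑ g, leafDist M 0 i g * F g = F (fun _ => i) := by
  rw [Fintype.sum_eq_single (fun _ => i)]
  · simp [leafDist_zero]
  · intro g hg
    rw [leafDist_zero, if_neg, zero_mul]
    exact fun h => hg (funext fun t => Subsingleton.elim t ⟨0, Nat.one_pos⟩ ▸ h)

theorem leafDist_add (a r : ℕ) (i : Fin q) (f : Fin (2 ^ (a + r)) → Fin q) :
    leafDist M (a + r) i f =
      ∑ g : Fin (2 ^ a) → Fin q,
        leafDist M a i g * ∏ t : Fin (2 ^ a), leafDist M r (g t) (restr a r f t) := by
  induction a generalizing i with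
  | zero =>
    rw [leafDist_eq_of_level_eq M (Nat.zero_add r), sum_leafDist_zero_mul,
      Fintype.prod_subsingleton _ ⟨0, Nat.one_pos⟩]
    congr 1
    funext x
    simp only [restr, zero_mul, zero_add]
    rfl
  | succ a ih =>
    rw [leafDist_eq_of_level_eq M (Nat.succ_add a r), leafDist_succ]
    simp only [ih, Function.comp_apply, ← restr_splitLeaves_inl, ← restr_splitLeaves_inr]
    rw [← (splitLeafFun (Fin q) a).sum_comp, Fintype.sum_prod_type]
    simp only [leafDist_splitLeafFun, ← (splitLeaves a).prod_comp, Fintype.prod_sum_type,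
      splitLeafFun_apply_inl, splitLeafFun_apply_inr]
    exact sum_sum_mul_sum_sum _ _ _ _ _

end LeafDist

theorem stmt16_general (q : ℕ) (M : Matrix (Fin q) (Fin q) ℝ) (r a : ℕ) (δ : ℝ)
    (νbar : (Fin (2 ^ r) → Fin q) → ℝ) (ν' : Fin q → (Fin (2 ^ r) → Fin q) → ℝ)
    (hdecomp : ∀ i f, leafDist M r i f = (1 - δ) * νbar f + δ * ν' i f) :
    ∀ (i : Fin q) (f : Fin (2 ^ (a + r)) → Fin q),
      leafDist M (a + r) i f =
        ∑ g : Fin (2 ^ a) → Fin q,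
          leafDist M a i g *
            ∏ t : Fin (2 ^ a),
              ((1 - δ) * νbar (restr a r f t) + δ * ν' (g t) (restr a r f t)) := by
  intro i f
  simp only [← hdecomp]
  exact leafDist_add M a r i f

/-- Non-solvability of ancestral reconstruction gives a channel mixture
decomposition: if the `r`-level leaf distributions of the homogeneous tree with
edge matrix `M = e^{τQ}` (Q reversible w.r.t. `π`) decompose as
`μ^{r,i} = (1-δ)ν̄ + δ ν'^i`, then the `ℓ = (a+r)`-level leaf distribution can
be sampled by running the process to level `a`, erasing each level-`a` state
with probability `1-δ` (filling its subtree from `ν̄`) and otherwise filling the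
subtree below a node labelled `j` from `ν'^j`; i.e. `μ^{ℓ,i}` equals the
corresponding mixture over erasure patterns. -/
theorem stmt16 (q : ℕ) (hq : 2 ≤ q) (τ : ℝ) (hτ : 0 < τ)
    (Q : Matrix (Fin q) (Fin q) ℝ) (π : Fin q → ℝ)
    (hπ : ∀ i, 0 < π i) (hrev : ∀ i j, π i * Q i j = π j * Q j i)
    (hrate : ∀ i, ∑ j, Q i j = 0) (hoff : ∀ i j, i ≠ j → 0 < Q i j)
    (M : Matrix (Fin q) (Fin q) ℝ) (hM : M = NormedSpace.exp (τ • Q))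
    (r a : ℕ) (ha : 1 ≤ a)
    (δ : ℝ) (hδ0 : 0 < δ) (hδ1 : δ < 1)
    (νbar : (Fin (2 ^ r) → Fin q) → ℝ) (ν' : Fin q → (Fin (2 ^ r) → Fin q) → ℝ)
    (hνbar0 : ∀ f, 0 ≤ νbar f) (hνbar1 : ∑ f, νbar f = 1)
    (hν'0 : ∀ i f, 0 ≤ ν' i f) (hν'1 : ∀ i, ∑ f, ν' i f = 1)
    (hdecomp : ∀ i f, leafDist M r i f = (1 - δ) * νbar f + δ * ν' i f) :
    ∀ (i : Fin q) (f : Fin (2 ^ (a + r)) → Fin q),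
      leafDist M (a + r) i f =
        ∑ g : Fin (2 ^ a) → Fin q,
          leafDist M a i g *
            ∏ t : Fin (2 ^ a),
              ((1 - δ) * νbar (restr a r f t) + δ * ν' (g t) (restr a r f t)) :=
  stmt16_general q M r a δ νbar ν' hdecomp
end
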